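/- If a vertex-partitioned graph H has no independent transversal, and J is a disjoint vertex-partitioned graph with no independent transversal, then the graph G = H ∪ J, with vertex partition obtained by keeping all partition classes of H and J except one chosen class of J whose vertices are distributed arbitrarily into the classes of H, also has no independent transversal. -/

import Mathlib

/-- An independent transversal of a vertex-partitioned graph: a choice of one
vertex from each partition class (fibers of `p`) forming an independent set. -/
def HasIT {V ι : Type*} (G : SimpleGraph V) (p : V → ι) : Prop :=
  ∃ f : ι → V, (∀ i, p (f i) = i) ∧ ∀ i j, ¬ G.Adj (f i) (f j)

def disjUnionGraph {V₁ V₂ : Type*} (H : SimpleGraph V₁) (J : SimpleGraph V₂) :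
    SimpleGraph (V₁ ⊕ V₂) where
  Adj a b := Sum.LiftRel H.Adj J.Adj a b
  symm := by
    constructor
    rintro a b h
    cases h with
    | inl h => exact Sum.LiftRel.inl (H.adj_symm h)
    | inr h => exact Sum.LiftRel.inr (J.adj_symm h)
  loopless := by
    constructor
    rintro a h
    cases h with
    | inl h => exact H.irrefl h
    | inr h => exact J.irrefl h

/-!
An independent transversal of the merged graph is an independent set meeting every class.
If it contains a vertex of the dissolved class `j₀` of `J` (which then represents a class of `H`),
its vertices in `J` meet every class of `J`; otherwise each class of `H` is represented by a vertex
of `H`. Either way `H` or `J` would have an independent transversal.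
-/

open Set

theorem hasIT_iff_exists_isIndepSet_surjOn {V ι : Type*} {G : SimpleGraph V} {p : V → ι} :
    HasIT G p ↔ ∃ S : Set V, G.IsIndepSet S ∧ SurjOn p S univ := by
  constructor
  · rintro ⟨f, hf, hind⟩
    refine ⟨range f, ?_, fun i _ => ⟨f i, ⟨i, rfl⟩, hf i⟩⟩
    rintro _ ⟨i, rfl⟩ _ ⟨j, rfl⟩ _
    exact hind i j
  · rintro ⟨S, hS, hcover⟩
    choose f hfS hf using fun i => hcover (mem_univ i)
    exact ⟨f, hf, fun i j hadj => hS (hfS i) (hfS j) hadj.ne hadj⟩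

theorem SimpleGraph.IsIndepSet.preimage {V W : Type*} {G : SimpleGraph V} {G' : SimpleGraph W}
    (φ : G →g G') {S : Set W} (hS : G'.IsIndepSet S) : G.IsIndepSet (φ ⁻¹' S) :=
  fun _ hx _ hy _ hadj => hS hx hy (φ.map_adj hadj).ne (φ.map_adj hadj)

namespace disjUnionGraph

variable {V₁ V₂ : Type*} (H : SimpleGraph V₁) (J : SimpleGraph V₂)

def inlHom : H →g disjUnionGraph H J := ⟨Sum.inl, Sum.LiftRel.inl⟩

def inrHom : J →g disjUnionGraph H J := ⟨Sum.inr, Sum.LiftRel.inr⟩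

end disjUnionGraph

section MergedPartition

variable {V₁ V₂ ι₁ ι₂ : Type*} [DecidableEq ι₂]

def mergedPartition (pH : V₁ → ι₁) (pJ : V₂ → ι₂) (j₀ : ι₂) (r : V₂ → ι₁) :
    V₁ ⊕ V₂ → ι₁ ⊕ {i : ι₂ // i ≠ j₀} :=
  Sum.elim (fun v => Sum.inl (pH v))
    (fun w => if h : pJ w = j₀ then Sum.inl (r w) else Sum.inr ⟨pJ w, h⟩)

variable {pH : V₁ → ι₁} {pJ : V₂ → ι₂} {j₀ : ι₂} {r : V₂ → ι₁} {S : Set (V₁ ⊕ V₂)}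

theorem mergedPartition.surjOn_inr_preimage (hS : SurjOn (mergedPartition pH pJ j₀ r) S univ)
    (hj₀ : ∃ w, Sum.inr w ∈ S ∧ pJ w = j₀) :
    SurjOn pJ (Sum.inr ⁻¹' S) univ := by
  intro j _
  by_cases hj : j = j₀
  · exact hj ▸ hj₀
  obtain ⟨v | w, hvS, hv⟩ := hS (mem_univ (Sum.inr ⟨j, hj⟩))
  · simp [mergedPartition] at hv
  · simp only [mergedPartition, Sum.elim_inr] at hv
    split_ifs at hv
    exact ⟨w, hvS, congrArg Subtype.val (Sum.inr_injective hv)⟩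

theorem mergedPartition.surjOn_inl_preimage (hS : SurjOn (mergedPartition pH pJ j₀ r) S univ)
    (hj₀ : ¬ ∃ w, Sum.inr w ∈ S ∧ pJ w = j₀) :
    SurjOn pH (Sum.inl ⁻¹' S) univ := by
  intro i _
  obtain ⟨v | w, hvS, hv⟩ := hS (mem_univ (Sum.inl i))
  · exact ⟨v, hvS, Sum.inl_injective hv⟩
  · by_cases hw : pJ w = j₀
    · exact absurd ⟨w, hvS, hw⟩ hj₀
    · simp [mergedPartition, hw] at hv

theorem not_hasIT_mergedPartition {H : SimpleGraph V₁} {J : SimpleGraph V₂}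
    (hH : ¬ HasIT H pH) (hJ : ¬ HasIT J pJ) :
    ¬ HasIT (disjUnionGraph H J) (mergedPartition pH pJ j₀ r) := by
  rw [hasIT_iff_exists_isIndepSet_surjOn]
  rintro ⟨S, hindep, hS⟩
  by_cases hj₀ : ∃ w, Sum.inr w ∈ S ∧ pJ w = j₀
  · exact hJ <| hasIT_iff_exists_isIndepSet_surjOn.2
      ⟨_, hindep.preimage (disjUnionGraph.inrHom H J), mergedPartition.surjOn_inr_preimage hS hj₀⟩
  · exact hH <| hasIT_iff_exists_isIndepSet_surjOn.2
      ⟨_, hindep.preimage (disjUnionGraph.inlHom H J), mergedPartition.surjOn_inl_preimage hS hj₀⟩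

end MergedPartition

theorem stmt0 {V₁ V₂ ι₁ ι₂ : Type*} [DecidableEq ι₂]
    (H : SimpleGraph V₁) (J : SimpleGraph V₂)
    (pH : V₁ → ι₁) (pJ : V₂ → ι₂)
    (hH : ¬ HasIT H pH) (hJ : ¬ HasIT J pJ)
    (j₀ : ι₂) (r : V₂ → ι₁) :
    ¬ HasIT (disjUnionGraph H J)
      (fun v => match v with
        | Sum.inl v => Sum.inl (pH v)
        | Sum.inr v =>
            if h : pJ v = j₀ then Sum.inl (r v)
            else Sum.inr (⟨pJ v, h⟩ : {i : ι₂ // i ≠ j₀})) := by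
  convert not_hasIT_mergedPartition (j₀ := j₀) (r := r) hH hJ using 3 with v
  cases v <;> rfl
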